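/- Let J_H be the H-step MPC value as above and suppose for the closed-loop process (x_t): (i) the one-step inequality J_H(x_t) ≥ C(x_t, π(x_t)) + E[J_H(x_{t+1}) | x_t] holds a.s.; (ii) C(x,u) ≥ ε·1_{x∉G} with ε>0; (iii) J_H ≥ 0; and (iv) P(x_t ∉ G) → 0 with J_H bounded on G by 0 (i.e., J_H(x) = 0 for x ∈ G, using V = 0 on G and zero cost inside G). Then the H-step MPC value upper-bounds the true infinite-horizon expected closed-loop cost: J_H(x₀) ≥ E[Σ_{t=0}^∞ C(x_t, π(x_t))] = J^π(x₀). -/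
import Mathlib


open Classical

open MeasureTheory
open scoped ENNReal

/-- Expected `H`-step cost of the policy sequence `πs` from state `x`. -/
noncomputable def mpcCost {X U W : Type*} [MeasurableSpace W] (μ : Measure W)
    (f : X → U → W → X) (C : X → U → ℝ≥0∞) (V : X → ℝ≥0∞) :
    ℕ → (ℕ → X → U) → X → ℝ≥0∞
  | 0, _, x => V x
  | (H + 1), πs, x =>
      C x (πs 0 x) + ∫⁻ w, mpcCost μ f C V H (fun i => πs (i + 1)) (f x (πs 0 x) w) ∂μ

/-- Robust admissibility of the policy sequence `πs` from `x`. -/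
def mpcAdmissible {X U W : Type*} (f : X → U → W → X) (Wset : Set W)
    (𝒳 S : Set X) : ℕ → (ℕ → X → U) → X → Prop
  | 0, _, x => x ∈ S ∧ x ∈ 𝒳
  | (H + 1), πs, x => x ∈ 𝒳 ∧
      ∀ w ∈ Wset, mpcAdmissible f Wset 𝒳 S H (fun i => πs (i + 1)) (f x (πs 0 x) w)

/-- The `H`-step MPC value: infimum of expected cost over admissible policy sequences. -/
noncomputable def mpcValue {X U W : Type*} [MeasurableSpace W] (μ : Measure W)
    (f : X → U → W → X) (C : X → U → ℝ≥0∞) (V : X → ℝ≥0∞) (Wset : Set W)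
    (𝒳 S : Set X) (H : ℕ) (x : X) : ℝ≥0∞ :=
  ⨅ πs ∈ {πs : ℕ → X → U | mpcAdmissible f Wset 𝒳 S H πs x}, mpcCost μ f C V H πs x

/-- Expected sum of the first `L` closed-loop stage costs under policy `π` from `x`. -/
noncomputable def closedLoopCostSum {X U W : Type*} [MeasurableSpace W] (μ : Measure W)
    (f : X → U → W → X) (π : X → U) (C : X → U → ℝ≥0∞) : ℕ → X → ℝ≥0∞
  | 0, _ => 0
  | (L + 1), x => C x (π x) + ∫⁻ w, closedLoopCostSum μ f π C L (f x (π x) w) ∂μ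

/-- Probability that the closed-loop state after `t` steps lies outside `G`. -/
noncomputable def closedLoopPnotG {X U W : Type*} [MeasurableSpace W] (μ : Measure W)
    (f : X → U → W → X) (π : X → U) (G : Set X) : ℕ → X → ℝ≥0∞
  | 0, x => if x ∈ G then 0 else 1
  | (t + 1), x => ∫⁻ w, closedLoopPnotG μ f π G t (f x (π x) w) ∂μ

/-- First half of Theorem 1 (Eqs. P2.1–P2.5): under (i) the one-step dissipation
inequality for `J_H` along the closed loop, (ii) `C ≥ ε·1_{∉G}` with `ε > 0`,
(iii) `J_H ≥ 0` (automatic in `ℝ≥0∞`), and (iv) `P(x_t ∉ G) → 0` with `J_H = 0` on `G`,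
the `H`-step MPC value upper-bounds the infinite-horizon expected closed-loop cost
`J^π(x₀) = E[Σ_{t=0}^∞ C(x_t, π(x_t))] = ⨆_L E[Σ_{t<L} C(x_t, π(x_t))]`. -/
theorem stmt_10 {X U W : Type*} [MeasurableSpace W] (μ : Measure W)
    [IsProbabilityMeasure μ] (f : X → U → W → X) (C : X → U → ℝ≥0∞)
    (V : X → ℝ≥0∞) (Wset : Set W) (𝒳 S : Set X) (H : ℕ)
    (π : X → U) (G : Set X) (ε : ℝ≥0∞) (hε : 0 < ε)
    (honestep : ∀ x : X,
      C x (π x) + (∫⁻ w, mpcValue μ f C V Wset 𝒳 S H (f x (π x) w) ∂μ) ≤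
        mpcValue μ f C V Wset 𝒳 S H x)
    (hC : ∀ x u, x ∉ G → ε ≤ C x u)
    (x₀ : X)
    (hconv : Filter.Tendsto (fun t => closedLoopPnotG μ f π G t x₀)
      Filter.atTop (nhds 0))
    (hJG : ∀ x ∈ G, mpcValue μ f C V Wset 𝒳 S H x = 0) :
    (⨆ L : ℕ, closedLoopCostSum μ f π C L x₀) ≤ mpcValue μ f C V Wset 𝒳 S H x₀ := by
  have key : ∀ L x, closedLoopCostSum μ f π C L x ≤ mpcValue μ f C V Wset 𝒳 S H x := by
    intro L
    induction L with
    | zero => intro x; simp [closedLoopCostSum]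
    | succ L ih =>
      intro x
      calc closedLoopCostSum μ f π C (L + 1) x
          = C x (π x) + ∫⁻ w, closedLoopCostSum μ f π C L (f x (π x) w) ∂μ := rfl
        _ ≤ C x (π x) + ∫⁻ w, mpcValue μ f C V Wset 𝒳 S H (f x (π x) w) ∂μ := by
            gcongr with w; exact ih _
        _ ≤ mpcValue μ f C V Wset 𝒳 S H x := honestep x
  exact iSup_le fun L => key L x₀
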